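/- arXiv:1909.02499 — 10 statements merged into one kernel-verified Lean document; each statement's English description precedes it below -/
import Mathlib

section
/- Let N ≥ 1 and let p : {0,...,N} → (0,1) be any function. Define q : {0,...,N+1} → ℝ by q(a) = K * C(N+1,a) * (∏_{i=0}^{a-1} p(i)) * (∏_{i=a}^{N} (1-p(i))), where K is the normalizing constant making ∑_{a=0}^{N+1} q(a) = 1. Then each q(a) > 0 and for all a = 0,...,N, p(a) = (a+1)·q(a+1) / ((a+1)·q(a+1) + (N+1-a)·q(a)). -/
open Finset

/-- Unnormalized probability of `a` successes among `n + 1` exchangeable events whose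
predictive probabilities are `p`. -/
def genBinomialWeight {R : Type*} [CommRing R] (n : ℕ) (p : ℕ → R) (a : ℕ) : R :=
  (n + 1).choose a * (∏ i ∈ range a, p i) * ∏ i ∈ Icc a n, (1 - p i)

theorem prod_Icc_eq_mul_prod_Icc_succ {M : Type*} [CommMonoid M] (f : ℕ → M) {a b : ℕ}
    (hab : a ≤ b) : ∏ i ∈ Icc a b, f i = f a * ∏ i ∈ Icc (a + 1) b, f i := by
  rw [Icc_eq_cons_Ioc hab, prod_cons, Icc_add_one_left_eq_Ioc]

theorem genBinomialWeight_pos {n : ℕ} {p : ℕ → ℝ} (hp : ∀ i ≤ n, p i ∈ Set.Ioo (0 : ℝ) 1)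
    {a : ℕ} (ha : a ≤ n + 1) : 0 < genBinomialWeight n p a := by
  have hchoose : (0 : ℝ) < (n + 1).choose a := by exact_mod_cast Nat.choose_pos ha
  have hsucc : 0 < ∏ i ∈ range a, p i :=
    prod_pos fun i hi => (hp i (by grind)).1
  have hfail : 0 < ∏ i ∈ Icc a n, (1 - p i) :=
    prod_pos fun i hi => sub_pos.2 (hp i (mem_Icc.1 hi).2).2
  unfold genBinomialWeight
  positivity

/-- All product factors but the `a`-th cancel, and `(a+1) C(n+1,a+1) = (n+1-a) C(n+1,a)`. -/
theorem succ_mul_genBinomialWeight_succ_mul_one_sub {R : Type*} [CommRing R] (n : ℕ)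
    (p : ℕ → R) {a : ℕ} (ha : a ≤ n) :
    ((a : R) + 1) * genBinomialWeight n p (a + 1) * (1 - p a) =
      ((n : R) + 1 - a) * genBinomialWeight n p a * p a := by
  have hchoose :
      ((a : R) + 1) * (n + 1).choose (a + 1) = ((n : R) + 1 - a) * (n + 1).choose a := by
    have h := congrArg (Nat.cast (R := R)) (Nat.choose_succ_right_eq (n + 1) a)
    push_cast [Nat.cast_sub (by omega : a ≤ n + 1)] at h
    linear_combination h
  unfold genBinomialWeight
  rw [prod_range_succ, prod_Icc_eq_mul_prod_Icc_succ _ ha]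
  linear_combination ((∏ i ∈ range a, p i) * (∏ i ∈ Icc (a + 1) n, (1 - p i)) * p a *
    (1 - p a)) * hchoose

theorem eq_div_add_of_mul_one_sub_eq {K : Type*} [Field K] {x A B : K} (hAB : A + B ≠ 0)
    (h : A * (1 - x) = B * x) : x = A / (A + B) := by
  rw [eq_div_iff hAB]
  linear_combination -h

theorem stmt_0_general (N : ℕ) (p q : ℕ → ℝ) (K : ℝ)
    (hp : ∀ i ≤ N, p i ∈ Set.Ioo (0 : ℝ) 1)
    (hK : K = (∑ a ∈ Finset.range (N + 2),
        ((N + 1).choose a : ℝ) * (∏ i ∈ Finset.range a, p i) *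
          (∏ i ∈ Finset.Icc a N, (1 - p i)))⁻¹)
    (hq : ∀ a ≤ N + 1, q a = K * ((N + 1).choose a : ℝ) *
        (∏ i ∈ Finset.range a, p i) * (∏ i ∈ Finset.Icc a N, (1 - p i))) :
    (∀ a ≤ N + 1, 0 < q a) ∧
      ∀ a ≤ N, p a =
        (((a : ℝ) + 1) * q (a + 1)) /
          (((a : ℝ) + 1) * q (a + 1) + ((N : ℝ) + 1 - (a : ℝ)) * q a) := by
  have hq' : ∀ a ≤ N + 1, q a = K * genBinomialWeight N p a := fun a ha => by
    rw [hq a ha, genBinomialWeight]; ring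
  have hKpos : 0 < K := by
    rw [hK]
    exact inv_pos.2 (sum_pos (fun a ha => genBinomialWeight_pos hp (by grind))
      nonempty_range_add_one)
  have hqpos : ∀ a ≤ N + 1, 0 < q a := fun a ha => by
    rw [hq' a ha]
    exact mul_pos hKpos (genBinomialWeight_pos hp ha)
  refine ⟨hqpos, fun a ha => eq_div_add_of_mul_one_sub_eq ?_ ?_⟩
  · have : (a : ℝ) ≤ N := by exact_mod_cast ha
    exact (add_pos (mul_pos (by positivity) (hqpos (a + 1) (by omega)))
      (mul_pos (by linarith) (hqpos a (by omega)))).ne'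
  · rw [hq' a (by omega), hq' (a + 1) (by omega)]
    linear_combination K * succ_mul_genBinomialWeight_succ_mul_one_sub N p ha

/-- Inversion of the finite exchangeability relation: the generalized-binomial
pmf `q` built from predictive probabilities `p` is positive and satisfies the
direct equations recovering `p` from `q`. -/
theorem stmt_0 (N : ℕ) (hN : 1 ≤ N) (p q : ℕ → ℝ) (K : ℝ)
    (hp : ∀ i ≤ N, p i ∈ Set.Ioo (0 : ℝ) 1)
    (hK : K = (∑ a ∈ Finset.range (N + 2),
        ((N + 1).choose a : ℝ) * (∏ i ∈ Finset.range a, p i) *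
          (∏ i ∈ Finset.Icc a N, (1 - p i)))⁻¹)
    (hq : ∀ a ≤ N + 1, q a = K * ((N + 1).choose a : ℝ) *
        (∏ i ∈ Finset.range a, p i) * (∏ i ∈ Finset.Icc a N, (1 - p i))) :
    (∀ a ≤ N + 1, 0 < q a) ∧
      ∀ a ≤ N, p a =
        (((a : ℝ) + 1) * q (a + 1)) /
          (((a : ℝ) + 1) * q (a + 1) + ((N : ℝ) + 1 - (a : ℝ)) * q a) :=
  stmt_0_general N p q K hp hK hq
end

section
/- Let N ≥ 1 and let q : {0,...,N+1} → ℝ be a probability mass function with all values strictly positive. Define q' : {0,...,N} → ℝ by q'(a) = (C(N,a)/C(N+1,a))·q(a) + (C(N,a)/C(N+1,a+1))·q(a+1). Then q' is a probability mass function on {0,...,N}, i.e., q'(a) ≥ 0 for all a and ∑_{a=0}^{N} q'(a) = 1. -/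
/-! The reduction weights of `q a` coming from `q'(a)` and `q'(a-1)` are
`C(N,a)/C(N+1,a)` and `C(N,a-1)/C(N+1,a)`, which sum to one by Pascal's rule; hence
summing `q'` redistributes each `q a` exactly once. -/

open Finset

theorem sum_range_succ_mul_add_mul_succ {R : Type*} [CommSemiring R] (u v q : ℕ → R) (n : ℕ) :
    ∑ a ∈ range (n + 1), (u a * q a + v a * q (a + 1)) =
      u 0 * q 0 + ∑ a ∈ range n, (u (a + 1) + v a) * q (a + 1) + v n * q (n + 1) := by
  simp only [sum_add_distrib, add_mul]
  rw [sum_range_succ', sum_range_succ (fun a => v a * q (a + 1))]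
  ring

theorem Nat.choose_succ_div_add_choose_div {K : Type*} [Field K] [CharZero K] {n k : ℕ}
    (hk : k ≤ n) :
    (n.choose (k + 1) : K) / (n + 1).choose (k + 1) + (n.choose k : K) / (n + 1).choose (k + 1)
      = 1 := by
  rw [← add_div, add_comm, ← Nat.cast_add, ← Nat.choose_succ_succ']
  exact div_self (Nat.cast_ne_zero.mpr (Nat.choose_pos (by omega)).ne')

theorem stmt_1_general (N : ℕ) (q q' : ℕ → ℝ)
    (hpos : ∀ a ≤ N + 1, 0 < q a)
    (hsum : ∑ a ∈ Finset.range (N + 2), q a = 1)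
    (hq' : ∀ a ≤ N, q' a =
        ((N.choose a : ℝ) / ((N + 1).choose a : ℝ)) * q a +
          ((N.choose a : ℝ) / ((N + 1).choose (a + 1) : ℝ)) * q (a + 1)) :
    (∀ a ≤ N, 0 ≤ q' a) ∧ ∑ a ∈ Finset.range (N + 1), q' a = 1 := by
  refine ⟨fun a ha => ?_, ?_⟩
  · have := (hpos a (by omega)).le
    have := (hpos (a + 1) (by omega)).le
    rw [hq' a ha]
    positivity
  · rw [sum_congr rfl fun a ha => hq' a (Nat.lt_succ_iff.mp (mem_range.mp ha)),
      sum_range_succ_mul_add_mul_succ,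
      sum_congr rfl fun a ha => by
        rw [Nat.choose_succ_div_add_choose_div (mem_range.mp ha).le, one_mul]]
    simp only [Nat.choose_zero_right, Nat.choose_self, Nat.cast_one, div_one, one_mul]
    rw [← hsum, sum_range_succ, sum_range_succ' q]
    ring

/-- The standard reduction of the pmf of the sum of `N+1` exchangeable events
to the pmf of the sum of the first `N` events yields a probability mass
function. -/
theorem stmt_1 (N : ℕ) (hN : 1 ≤ N) (q q' : ℕ → ℝ)
    (hpos : ∀ a ≤ N + 1, 0 < q a)
    (hsum : ∑ a ∈ Finset.range (N + 2), q a = 1)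
    (hq' : ∀ a ≤ N, q' a =
        ((N.choose a : ℝ) / ((N + 1).choose a : ℝ)) * q a +
          ((N.choose a : ℝ) / ((N + 1).choose (a + 1) : ℝ)) * q (a + 1)) :
    (∀ a ≤ N, 0 ≤ q' a) ∧ ∑ a ∈ Finset.range (N + 1), q' a = 1 :=
  stmt_1_general N q q' hpos hsum hq'
end

section
/- Let N ≥ 2 and let q : {0,...,N+1} → ℝ be a strictly positive pmf. Define p_N(a) = (a+1)·q(a+1)/((a+1)·q(a+1)+(N+1-a)·q(a)) for a = 0,...,N, let q' be the reduced pmf q'(a) = (C(N,a)/C(N+1,a))·q(a) + (C(N,a)/C(N+1,a+1))·q(a+1), and define p_{N-1}(a) = (a+1)·q'(a+1)/((a+1)·q'(a+1)+(N-a)·q'(a)) for a = 0,...,N-1. Then p_{N-1}(a) = p_N(a)/(1 - p_N(a+1) + p_N(a)) for all a = 0,...,N-1. -/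
/-!
Multiplying the reduced pmf by `N + 1` turns the binomial ratios into linear weights, and
`(N + 1) q'(a) = (a + 1) q(a + 1) + (N + 1 - a) q(a)` is exactly the denominator of `p_N(a)`.
Hence `p_N(a) = (a + 1) q(a + 1) / ((N + 1) q'(a))` and
`1 - p_N(a + 1) = (N - a) q(a + 1) / ((N + 1) q'(a + 1))`; in the ratio
`p_N(a) / (1 - p_N(a + 1) + p_N(a))` the common factor `q(a + 1)` cancels, leaving `p_{N-1}(a)`.
-/

theorem Nat.cast_choose_div_succ_choose {K : Type*} [Field K] [CharZero K] {n k : ℕ}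
    (hk : k ≤ n + 1) :
    (n.choose k : K) / ((n + 1).choose k : K) = ((n : K) + 1 - k) / ((n : K) + 1) := by
  have hchoose : ((n + 1).choose k : K) ≠ 0 := by exact_mod_cast (Nat.choose_pos hk).ne'
  rw [div_eq_div_iff hchoose (Nat.cast_add_one_ne_zero n)]
  have h := congrArg (Nat.cast : ℕ → K) (Nat.choose_mul_succ_eq n k)
  push_cast [Nat.cast_sub hk] at h
  linear_combination h

theorem Nat.cast_choose_div_succ_choose_succ {K : Type*} [Field K] [CharZero K] {n k : ℕ}
    (hk : k ≤ n) :
    (n.choose k : K) / ((n + 1).choose (k + 1) : K) = ((k : K) + 1) / ((n : K) + 1) := by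
  have hchoose : ((n + 1).choose (k + 1) : K) ≠ 0 := by
    exact_mod_cast (Nat.choose_pos (Nat.succ_le_succ hk)).ne'
  rw [div_eq_div_iff hchoose (Nat.cast_add_one_ne_zero n)]
  have h := congrArg (Nat.cast : ℕ → K) (Nat.add_one_mul_choose_eq n k)
  push_cast at h
  linear_combination h

theorem div_div_one_sub_div_add_div {K : Type*} [Field K] {x y z B C D₁ D₂ c : K}
    (hB : B ≠ 0) (hc : c ≠ 0) (hD₁ : D₁ ≠ 0) (hD₂ : D₂ ≠ 0) (h : z * C + y * B = c * D₂) :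
    x * B / (c * D₁) / (1 - z * C / (c * D₂) + x * B / (c * D₁)) =
      x * D₂ / (x * D₂ + y * D₁) := by
  have hcD₂ : c * D₂ ≠ 0 := mul_ne_zero hc hD₂
  have hcompl : 1 - z * C / (c * D₂) = y * B / (c * D₂) := by
    rw [eq_div_iff hcD₂, sub_mul, div_mul_cancel₀ _ hcD₂]
    linear_combination -h
  rw [hcompl]
  field_simp
  ring

theorem stmt_2_general (N : ℕ) (hN : 2 ≤ N) (q q' pN pN' : ℕ → ℝ)
    (hpos : ∀ a ≤ N + 1, 0 < q a)
    (hpN : ∀ a ≤ N, pN a =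
        (((a : ℝ) + 1) * q (a + 1)) /
          (((a : ℝ) + 1) * q (a + 1) + ((N : ℝ) + 1 - (a : ℝ)) * q a))
    (hq' : ∀ a ≤ N, q' a =
        ((N.choose a : ℝ) / ((N + 1).choose a : ℝ)) * q a +
          ((N.choose a : ℝ) / ((N + 1).choose (a + 1) : ℝ)) * q (a + 1))
    (hpN' : ∀ a ≤ N - 1, pN' a =
        (((a : ℝ) + 1) * q' (a + 1)) /
          (((a : ℝ) + 1) * q' (a + 1) + ((N : ℝ) - (a : ℝ)) * q' a)) :
    ∀ a ≤ N - 1, pN' a = pN a / (1 - pN (a + 1) + pN a) := by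
  have hden : ∀ b ≤ N, ((b : ℝ) + 1) * q (b + 1) + ((N : ℝ) + 1 - b) * q b = (N + 1) * q' b := by
    intro b hb
    rw [hq' b hb, Nat.cast_choose_div_succ_choose (by omega),
      Nat.cast_choose_div_succ_choose_succ hb]
    field_simp
    ring
  have hq'_ne : ∀ b ≤ N, q' b ≠ 0 := by
    intro b hb
    have hbN : (b : ℝ) ≤ N := by exact_mod_cast hb
    have hden_pos : 0 < ((b : ℝ) + 1) * q (b + 1) + ((N : ℝ) + 1 - b) * q b := by
      have := hpos b (by omega)
      have := hpos (b + 1) (by omega)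
      have : (0 : ℝ) < N + 1 - b := by linarith
      positivity
    rw [hden b hb] at hden_pos
    exact right_ne_zero_of_mul hden_pos.ne'
  intro a ha
  have ha' : a + 1 ≤ N := by omega
  have haN : a ≤ N := by omega
  rw [hpN' a ha, hpN a haN, hden a haN, hpN (a + 1) ha', hden (a + 1) ha']
  refine (div_div_one_sub_div_add_div (hpos (a + 1) (by omega)).ne' (Nat.cast_add_one_ne_zero N)
    (hq'_ne a haN) (hq'_ne (a + 1) ha') ?_).symm
  linear_combination (norm := (push_cast; ring)) hden (a + 1) ha'

/-- The conditional-probability reduction formula: predictive probabilities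
based on `N-1` conditioning events are obtained from those based on `N`
conditioning events via `p_{a,N-1} = p_{a,N}/(1 - p_{a+1,N} + p_{a,N})`. -/
theorem stmt_2 (N : ℕ) (hN : 2 ≤ N) (q q' pN pN' : ℕ → ℝ)
    (hpos : ∀ a ≤ N + 1, 0 < q a)
    (hsum : ∑ a ∈ Finset.range (N + 2), q a = 1)
    (hpN : ∀ a ≤ N, pN a =
        (((a : ℝ) + 1) * q (a + 1)) /
          (((a : ℝ) + 1) * q (a + 1) + ((N : ℝ) + 1 - (a : ℝ)) * q a))
    (hq' : ∀ a ≤ N, q' a =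
        ((N.choose a : ℝ) / ((N + 1).choose a : ℝ)) * q a +
          ((N.choose a : ℝ) / ((N + 1).choose (a + 1) : ℝ)) * q (a + 1))
    (hpN' : ∀ a ≤ N - 1, pN' a =
        (((a : ℝ) + 1) * q' (a + 1)) /
          (((a : ℝ) + 1) * q' (a + 1) + ((N : ℝ) - (a : ℝ)) * q' a)) :
    ∀ a ≤ N - 1, pN' a = pN a / (1 - pN (a + 1) + pN a) :=
  stmt_2_general N hN q q' pN pN' hpos hpN hq' hpN'
end

section
/- Let N ≥ 2, and suppose p_N : {0,...,N} → (0,1) is monotone non-decreasing. Define p_{N-1}(a) = p_N(a)/(1 - p_N(a+1) + p_N(a)) for a = 0,...,N-1. Then p_{N-1} is monotone non-decreasing on {0,...,N-1}. -/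
/-!
Cross-multiplying, `p_{N-1}(a) ≤ p_{N-1}(a+1)` becomes
`p_N(a) (1 - p_N(a+2)) ≤ p_N(a+1) (1 - p_N(a+1))`, which holds factor by factor because `p_N` is
non-decreasing with values in `(0, 1)`. Monotonicity on `{0, …, N-1}` follows from these
adjacent steps.
-/

theorem div_one_sub_add_le_div_one_sub_add {x y z : ℝ} (hx : 0 ≤ x) (hxy : x ≤ y) (hyz : y ≤ z)
    (hz : z < 1) : x / (1 - y + x) ≤ y / (1 - z + y) := by
  rw [div_le_div_iff₀ (by linarith) (by linarith)]
  have key : x * (1 - z) ≤ y * (1 - y) :=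
    mul_le_mul hxy (by linarith) (by linarith) (hx.trans hxy)
  linarith

theorem stmt_5_general (N : ℕ) (pN pM : ℕ → ℝ)
    (hrange : ∀ a ≤ N, pN a ∈ Set.Ioo (0 : ℝ) 1)
    (hmono : ∀ a b, a ≤ b → b ≤ N → pN a ≤ pN b)
    (hred : ∀ a ≤ N - 1, pM a = pN a / (1 - pN (a + 1) + pN a)) :
    ∀ a b, a ≤ b → b ≤ N - 1 → pM a ≤ pM b := by
  have hstep : ∀ a, a + 1 ≤ N - 1 → pM a ≤ pM (a + 1) := by
    intro a ha
    rw [hred a (by omega), hred (a + 1) ha]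
    exact div_one_sub_add_le_div_one_sub_add (hrange a (by omega)).1.le
      (hmono a (a + 1) (by omega) (by omega)) (hmono (a + 1) (a + 1 + 1) (by omega) (by omega))
      (hrange (a + 1 + 1) (by omega)).2
  have hmonoOn : MonotoneOn pM (Set.Iic (N - 1)) :=
    monotoneOn_of_le_succ Set.ordConnected_Iic fun a _ _ ha => hstep a ha
  exact fun a b hab hb => hmonoOn (hab.trans hb) hb hab

/-- Monotonicity of the predictive probability function is preserved under the
coherent reduction equation. -/
theorem stmt_5 (N : ℕ) (hN : 2 ≤ N) (pN pM : ℕ → ℝ)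
    (hrange : ∀ a ≤ N, pN a ∈ Set.Ioo (0 : ℝ) 1)
    (hmono : ∀ a b, a ≤ b → b ≤ N → pN a ≤ pN b)
    (hred : ∀ a ≤ N - 1, pM a = pN a / (1 - pN (a + 1) + pN a)) :
    ∀ a b, a ≤ b → b ≤ N - 1 → pM a ≤ pM b :=
  stmt_5_general N pN pM hrange hmono hred
end

section
/- Let N ≥ 2 and let a ∈ {1,...,N-1}. Suppose p_N : {0,...,N} → (0,1) and p_{N+1} : {0,...,N+1} → (0,1) satisfy the extension relation p_N(b) = p_{N+1}(b)/(1 - p_{N+1}(b+1) + p_{N+1}(b)) for all b = 0,...,N. If p_N(a) = a/N and p_{N+1}(a) = a/(N+1), then p_{N+1}(a+1) = (a+1)/(N+1). -/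
/-! Solving the extension relation `p = x / (1 - y + x)` for `y` gives `y = 1 + x - x / p`;
with `p = a / N` and `x = a / (N + 1)` this is `1 + a / (N + 1) - N / (N + 1) = (a + 1) / (N + 1)`. -/

lemma eq_one_add_sub_div_of_eq_div_one_sub_add {p x y : ℝ} (h : p = x / (1 - y + x))
    (hp : p ≠ 0) : y = 1 + x - x / p := by
  have hx : x ≠ 0 := by rintro rfl; simp_all
  rw [h, div_div_cancel₀ hx]
  ring

theorem stmt_6_general (N a : ℕ) (ha₁ : 1 ≤ a) (ha₂ : a ≤ N - 1)
    (pN pN1 : ℕ → ℝ)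
    (hext : ∀ b ≤ N, pN b = pN1 b / (1 - pN1 (b + 1) + pN1 b))
    (hfmN : pN a = (a : ℝ) / (N : ℝ))
    (hfmN1 : pN1 a = (a : ℝ) / ((N : ℝ) + 1)) :
    pN1 (a + 1) = ((a : ℝ) + 1) / ((N : ℝ) + 1) := by
  have ha : (a : ℝ) ≠ 0 := by positivity
  have hN : (N : ℝ) ≠ 0 := by norm_cast; omega
  have hpN : pN a ≠ 0 := by rw [hfmN]; positivity
  rw [eq_one_add_sub_div_of_eq_div_one_sub_add (hext a (by omega)) hpN, hfmN, hfmN1]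
  field_simp
  ring

/-- One upward step of Theorem 4: if level-`N` predictive probabilities mimic
the frequency at `a` and the extension at level `N+1` also mimics the
frequency at `a`, then coherency forces frequency mimicking at `a+1` at
level `N+1`. -/
theorem stmt_6 (N a : ℕ) (hN : 2 ≤ N) (ha₁ : 1 ≤ a) (ha₂ : a ≤ N - 1)
    (pN pN1 : ℕ → ℝ)
    (hrN : ∀ b ≤ N, pN b ∈ Set.Ioo (0 : ℝ) 1)
    (hrN1 : ∀ b ≤ N + 1, pN1 b ∈ Set.Ioo (0 : ℝ) 1)
    (hext : ∀ b ≤ N, pN b = pN1 b / (1 - pN1 (b + 1) + pN1 b))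
    (hfmN : pN a = (a : ℝ) / (N : ℝ))
    (hfmN1 : pN1 a = (a : ℝ) / ((N : ℝ) + 1)) :
    pN1 (a + 1) = ((a : ℝ) + 1) / ((N : ℝ) + 1) :=
  stmt_6_general N a ha₁ ha₂ pN pN1 hext hfmN hfmN1
end

section
/- Let N ≥ 2 and let a ∈ {1,...,N}. Suppose p_N : {0,...,N} → (0,1) and p_{N+1} : {0,...,N+1} → (0,1) satisfy p_N(b) = p_{N+1}(b)/(1 - p_{N+1}(b+1) + p_{N+1}(b)) for all b = 0,...,N. If p_N(a-1) = (a-1)/N and p_{N+1}(a) = a/(N+1), then p_{N+1}(a-1) = (a-1)/(N+1). -/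
/-- The downward step of Theorem 4: frequency mimicking propagates downward
under the coherent extension equation. -/
theorem stmt_7 (N a : ℕ) (hN : 2 ≤ N) (ha₁ : 1 ≤ a) (ha₂ : a ≤ N)
    (pN pN1 : ℕ → ℝ)
    (hrN : ∀ b ≤ N, pN b ∈ Set.Ioo (0 : ℝ) 1)
    (hrN1 : ∀ b ≤ N + 1, pN1 b ∈ Set.Ioo (0 : ℝ) 1)
    (hext : ∀ b ≤ N, pN b = pN1 b / (1 - pN1 (b + 1) + pN1 b))
    (hfmN : pN (a - 1) = ((a : ℝ) - 1) / (N : ℝ))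
    (hfmN1 : pN1 a = (a : ℝ) / ((N : ℝ) + 1)) :
    pN1 (a - 1) = ((a : ℝ) - 1) / ((N : ℝ) + 1) := by
  have hb : a - 1 ≤ N := le_trans (Nat.sub_le a 1) ha₂
  have hsucc : a - 1 + 1 = a := Nat.succ_pred_eq_of_pos ha₁
  have heq := hext (a - 1) hb
  rw [hsucc, hfmN, hfmN1] at heq
  have hx := hrN1 (a - 1) (le_trans hb (Nat.le_succ N))
  have hxa := hrN1 a (le_trans ha₂ (Nat.le_succ N))
  rw [hfmN1] at hxa
  set x := pN1 (a - 1) with hxdef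
  have hNpos : (0 : ℝ) < N := by positivity
  have hN1pos : (0 : ℝ) < (N : ℝ) + 1 := by positivity
  have hden : 1 - (a : ℝ) / ((N : ℝ) + 1) + x > 0 := by
    have := hxa.2
    linarith [hx.1]
  have haR : (1 : ℝ) ≤ (a : ℝ) := by exact_mod_cast ha₁
  have haN : (a : ℝ) ≤ (N : ℝ) := by exact_mod_cast ha₂
  rw [div_eq_div_iff (ne_of_gt hNpos) (ne_of_gt hden)] at heq
  have hlt : (a : ℝ) < (N : ℝ) + 1 := by linarith
  rw [eq_div_iff (ne_of_gt hN1pos)]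
  have expand : ((a:ℝ) - 1) * ((N:ℝ) + 1 - a + x * ((N:ℝ)+1)) = x * (N:ℝ) * ((N:ℝ)+1) := by
    have h := congrArg (· * ((N:ℝ)+1)) heq
    field_simp at h
    nlinarith [h]
  have : (x * ((N:ℝ)+1) - ((a:ℝ)-1)) * ((N:ℝ) + 1 - a) = 0 := by nlinarith [expand]
  have h2 : (N:ℝ) + 1 - a > 0 := by linarith
  have := mul_eq_zero.mp this
  rcases this with h | h
  · linarith
  · linarith
end

section
/- Let N ≥ 2 and integers a_1 ≤ a_2 with 1 ≤ a_1, a_2 ≤ N-1. Suppose p_N : {0,...,N} → (0,1) and p_{N+1} : {0,...,N+1} → (0,1) satisfy p_N(b) = p_{N+1}(b)/(1 - p_{N+1}(b+1) + p_{N+1}(b)) for all b = 0,...,N, that p_N(b) = b/N for all integers b ∈ [a_1, a_2], and that p_{N+1}(a) = a/(N+1) for some integer a ∈ [a_1, a_2]. Then p_{N+1}(b) = b/(N+1) for every integer b ∈ [a_1, a_2 + 1]. -/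
/-- Theorem 4 of the paper: extending a restricted-subdomain frequency
mimicking assertion at level `N` by a single frequency-mimicking assertion at
level `N+1` forces frequency mimicking over `[a₁, a₂+1]` at level `N+1`. -/
theorem stmt_8 (N a₁ a₂ : ℕ) (hN : 2 ≤ N) (ha : a₁ ≤ a₂) (ha₁ : 1 ≤ a₁)
    (ha₂ : a₂ ≤ N - 1) (pN pN1 : ℕ → ℝ)
    (hrN : ∀ b ≤ N, pN b ∈ Set.Ioo (0 : ℝ) 1)
    (hrN1 : ∀ b ≤ N + 1, pN1 b ∈ Set.Ioo (0 : ℝ) 1)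
    (hext : ∀ b ≤ N, pN b = pN1 b / (1 - pN1 (b + 1) + pN1 b))
    (hfmN : ∀ b, a₁ ≤ b → b ≤ a₂ → pN b = (b : ℝ) / (N : ℝ))
    (a : ℕ) (haa : a₁ ≤ a) (hab : a ≤ a₂)
    (hfmN1 : pN1 a = (a : ℝ) / ((N : ℝ) + 1)) :
    ∀ b, a₁ ≤ b → b ≤ a₂ + 1 → pN1 b = (b : ℝ) / ((N : ℝ) + 1) := by
  have ha₂' : a₂ < N := by omega
  have hNpos : (0:ℝ) < N := by exact_mod_cast (by omega : 0 < N)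
  -- key equation from the coherent extension relation
  have hkey : ∀ b, a₁ ≤ b → b ≤ a₂ →
      ((N:ℝ) - b) * pN1 b + (b:ℝ) * pN1 (b+1) = b := by
    intro b hb1 hb2
    have h1 := hrN1 b (by omega)
    have h2 := hrN1 (b+1) (by omega)
    have hD : 0 < 1 - pN1 (b+1) + pN1 b := by
      have := h1.1; have := h2.2; linarith
    have he := hext b (by omega)
    rw [hfmN b hb1 hb2] at he
    have he' : (b:ℝ) * (1 - pN1 (b+1) + pN1 b) = N * pN1 b := by
      field_simp at he
      linarith
    nlinarith [he']
  have hbNlt : ∀ b, b ≤ a₂ → (b:ℝ) < N := by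
    intro b hb; exact_mod_cast (by omega : b < N)
  have hN1 : (0:ℝ) < (N:ℝ) + 1 := by linarith
  -- upward induction
  have hup : ∀ k, a + k ≤ a₂ + 1 → pN1 (a + k) = ((a + k : ℕ) : ℝ) / ((N:ℝ)+1) := by
    intro k
    induction k with
    | zero => intro _; simpa using hfmN1
    | succ k ih =>
      intro hk
      have hb2 : a + k ≤ a₂ := by omega
      have ihv := ih (by omega)
      have hkeq := hkey (a+k) (by omega) hb2
      rw [ihv] at hkeq
      push_cast at hkeq
      have hbpos : (0:ℝ) < (a:ℝ) + (k:ℝ) := by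
        have : (0:ℝ) < ((a+k:ℕ):ℝ) := by exact_mod_cast (by omega : 0 < a + k)
        push_cast at this; exact this
      have h3 : ((a:ℝ)+(k:ℝ)) * (pN1 (a+k+1) * ((N:ℝ)+1))
          = ((a:ℝ)+(k:ℝ)) * ((a:ℝ)+(k:ℝ)+1) := by
        field_simp at hkeq
        linear_combination ((a:ℝ)+(k:ℝ)) * hkeq
      have h4 : pN1 (a+k+1) = ((a:ℝ)+(k:ℝ)+1) / ((N:ℝ)+1) := by
        rw [eq_div_iff (ne_of_gt hN1)]
        exact mul_left_cancel₀ (ne_of_gt hbpos) h3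
      show pN1 (a+k+1) = ((a+(k+1) : ℕ) : ℝ) / ((N:ℝ)+1)
      rw [h4]; push_cast; ring
  -- downward induction
  have hdown : ∀ k, k ≤ a - a₁ → pN1 (a - k) = ((a - k : ℕ) : ℝ) / ((N:ℝ)+1) := by
    intro k
    induction k with
    | zero => intro _; simpa using hfmN1
    | succ k ih =>
      intro hk
      set b := a - (k+1) with hbdef
      have hab' : a - k = b + 1 := by omega
      have hb1 : a₁ ≤ b := by omega
      have hb2 : b ≤ a₂ := by omega
      have ihv := ih (by omega)
      rw [hab'] at ihv
      have hkeq := hkey b hb1 hb2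
      rw [ihv] at hkeq
      push_cast at hkeq
      have hblt : (b:ℝ) < N := hbNlt b hb2
      have hne : ((N:ℝ) - b) ≠ 0 := ne_of_gt (by linarith)
      have h3 : ((N:ℝ) - b) * (pN1 b * ((N:ℝ)+1)) = ((N:ℝ) - b) * (b:ℝ) := by
        field_simp at hkeq
        linear_combination hkeq
      have h4 : pN1 b = (b:ℝ) / ((N:ℝ)+1) := by
        rw [eq_div_iff (ne_of_gt hN1)]
        exact mul_left_cancel₀ hne h3
      exact h4
  intro b hb1 hb2
  rcases le_or_gt a b with h | h
  · have := hup (b - a) (by omega)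
    rwa [(by omega : a + (b - a) = b)] at this
  · have := hdown (a - b) (by omega)
    rwa [(by omega : a - (a - b) = b)] at this
end

section
/- Let N ≥ 2 and let q : {0,...,N+1} → ℝ be a strictly positive pmf satisfying q(a+1) = ((N+1-a)/(a+1)) · (p(a)/(1-p(a))) · q(a) for a = 0,...,N, where p(a) = a/N for a = 1,...,N-1. Then for each a = 2,...,N, q(a) = (1/a)·(N/(N-a+1))·q(1). -/
/-- Statement (ii) of Theorem 1: under universal frequency mimicking, the
interior masses of the pmf of the sum are determined by `q 1` via
`q a = (1/a)·(N/(N-a+1))·q 1`. -/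
theorem stmt_9 (N : ℕ) (hN : 2 ≤ N) (q p : ℕ → ℝ)
    (hpos : ∀ a ≤ N + 1, 0 < q a)
    (hsum : ∑ a ∈ Finset.range (N + 2), q a = 1)
    (hrec : ∀ a ≤ N, q (a + 1) =
        (((N : ℝ) + 1 - (a : ℝ)) / ((a : ℝ) + 1)) * (p a / (1 - p a)) * q a)
    (hfm : ∀ a, 1 ≤ a → a ≤ N - 1 → p a = (a : ℝ) / (N : ℝ)) :
    ∀ a, 2 ≤ a → a ≤ N →
      q a = (1 / (a : ℝ)) * ((N : ℝ) / ((N : ℝ) - (a : ℝ) + 1)) * q 1 := by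
  have hN0 : (N : ℝ) ≠ 0 := by positivity
  intro a ha2
  induction a, ha2 using Nat.le_induction with
  | base =>
    intro _
    have hp1 : p 1 = 1 / (N : ℝ) := by
      have := hfm 1 le_rfl (by omega); simpa using this
    have h := hrec 1 (by omega)
    have hN1 : (N : ℝ) - 1 ≠ 0 := by
      have : (2 : ℝ) ≤ (N : ℝ) := by exact_mod_cast hN
      nlinarith
    have hd : (1:ℝ) - 1 / (N:ℝ) ≠ 0 := by
      rw [sub_ne_zero]
      intro hc
      apply hN1
      field_simp at hc
      linarith
    rw [hp1] at h
    have key : ((N:ℝ) + 1 - (1:ℕ)) / ((1:ℕ) + 1) * (1 / ↑N / (1 - 1 / ↑N))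
        = 1 / 2 * ((N:ℝ) / ((N:ℝ) - 1)) := by
      rw [show (1:ℝ) - 1 / (N:ℝ) = ((N:ℝ) - 1) / N by field_simp]
      push_cast
      field_simp
      ring_nf
    rw [key] at h
    have h2 : q 2 = 1 / 2 * ((N:ℝ) / ((N:ℝ) - 1)) * q 1 := by
      norm_num at h
      convert h using 2
    rw [h2]
    push_cast
    rw [show (N:ℝ) - 2 + 1 = (N:ℝ) - 1 by ring]
  | succ a ha IH =>
    intro haN
    have ha1 : a ≤ N := by omega
    have IHa := IH ha1
    have hp : p a = (a : ℝ) / (N : ℝ) := hfm a (by omega) (by omega)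
    have h := hrec a ha1
    rw [hp, IHa] at h
    have haR : (2 : ℝ) ≤ (a : ℝ) := by exact_mod_cast ha
    have hNa : (a : ℝ) < (N : ℝ) := by exact_mod_cast (by omega : a < N)
    have h1 : (N : ℝ) - (a : ℝ) ≠ 0 := by nlinarith
    have h2 : (N : ℝ) - (a : ℝ) + 1 ≠ 0 := by nlinarith
    have ha0 : (a : ℝ) ≠ 0 := by nlinarith
    have ha1R : (a : ℝ) + 1 ≠ 0 := by nlinarith
    have hden : 1 - (a : ℝ) / (N : ℝ) = ((N : ℝ) - a) / N := by
      field_simp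
    rw [hden] at h
    push_cast at h ⊢
    rw [h, show (N:ℝ) - ((a:ℝ) + 1) + 1 = (N:ℝ) - a by ring]
    field_simp
    ring
end

section
/- Let N ≥ 1 and suppose q : {0,...,N+1} → ℝ is a strictly positive pmf such that for all a = 0,...,N, the quantity p(a) := (a+1)·q(a+1)/((a+1)·q(a+1) + (N+1-a)·q(a)) lies in (0,1). Then for a = 1,...,N+1: q(a) = C(N+1,a)·(∏_{i=0}^{a-1} p(i)/(1-p(i)))·q(0), and q(0) = (1 + ∑_{a=1}^{N+1} C(N+1,a)·∏_{i=0}^{a-1} p(i)/(1-p(i)))^{-1}. -/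
/-- The inversion equations (2): the pmf of the sum of `N+1` exchangeable
events is recovered from the predictive conditional probabilities by products
of odds ratios, normalized via `q 0`. -/
theorem stmt_15 (N : ℕ) (hN : 1 ≤ N) (q p : ℕ → ℝ)
    (hpos : ∀ a ≤ N + 1, 0 < q a)
    (hsum : ∑ a ∈ Finset.range (N + 2), q a = 1)
    (hp : ∀ a ≤ N, p a =
        (((a : ℝ) + 1) * q (a + 1)) /
          (((a : ℝ) + 1) * q (a + 1) + ((N : ℝ) + 1 - (a : ℝ)) * q a))
    (hrange : ∀ a ≤ N, p a ∈ Set.Ioo (0 : ℝ) 1) :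
    (∀ a, 1 ≤ a → a ≤ N + 1 →
        q a = ((N + 1).choose a : ℝ) *
          (∏ i ∈ Finset.range a, p i / (1 - p i)) * q 0) ∧
      q 0 = (1 + ∑ a ∈ Finset.Icc 1 (N + 1),
          ((N + 1).choose a : ℝ) * ∏ i ∈ Finset.range a, p i / (1 - p i))⁻¹ := by
  have key : ∀ a ≤ N + 1, q a = ((N + 1).choose a : ℝ) *
      (∏ i ∈ Finset.range a, p i / (1 - p i)) * q 0 := by
    intro a ha
    induction a with
    | zero => simp
    | succ a ih =>
      have haN : a ≤ N := Nat.lt_succ_iff.mp ha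
      have hqa := hpos a (by omega)
      have hqa1 := hpos (a + 1) (by omega)
      have hpa := hp a haN
      have hr := hrange a haN
      have h1 : (0:ℝ) < 1 - p a := by linarith [hr.2]
      have hcast : (a : ℝ) ≤ N := by exact_mod_cast haN
      have hNa : (0:ℝ) < (N:ℝ) + 1 - a := by linarith
      have hD : (0:ℝ) < ((a:ℝ)+1) * q (a+1) + ((N:ℝ)+1-a) * q a := by positivity
      have heq : (1 - p a) * (((a:ℝ)+1) * q (a+1)) = p a * (((N:ℝ)+1-(a:ℝ)) * q a) := by
        rw [hpa]
        field_simp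
        ring
      have step : q (a+1) = (p a / (1 - p a)) * ((((N:ℝ)+1-a))/((a:ℝ)+1)) * q a := by
        have ha1 : ((a:ℝ)+1) ≠ 0 := by positivity
        field_simp
        linarith [heq]
      have hch : ((N + 1).choose (a+1) : ℝ) * ((a:ℝ)+1) =
          ((N + 1).choose a : ℝ) * ((N:ℝ)+1-a) := by
        have := Nat.choose_succ_right_eq (N+1) a
        have hsub : ((N + 1 - a : ℕ) : ℝ) = (N:ℝ)+1-a := by
          push_cast [Nat.cast_sub (by omega : a ≤ N + 1)]
          ring
        calc ((N + 1).choose (a+1) : ℝ) * ((a:ℝ)+1)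
            = (((N+1).choose (a+1) * (a+1) : ℕ) : ℝ) := by push_cast; ring
          _ = (((N+1).choose a * (N+1-a) : ℕ) : ℝ) := by rw [this]
          _ = ((N + 1).choose a : ℝ) * ((N:ℝ)+1-a) := by push_cast [hsub]; ring
      have hch' : ((N + 1).choose (a+1) : ℝ) =
          ((N + 1).choose a : ℝ) * ((N:ℝ)+1-a) / ((a:ℝ)+1) := by
        field_simp at hch ⊢
        linarith
      rw [step, ih (by omega), Finset.prod_range_succ, hch']
      field_simp
  constructor
  · intro a _ ha; exact key a ha
  · have hsplit : ∑ a ∈ Finset.range (N + 2), q a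
        = q 0 + ∑ a ∈ Finset.Icc 1 (N + 1), q a := by
      have : Finset.range (N + 2) = Finset.Icc 0 (N + 1) := by
        ext x; simp [Finset.mem_range, Finset.mem_Icc]; omega
      rw [this, ← Finset.sum_Ioc_add_eq_sum_Icc (by omega : (0:ℕ) ≤ N + 1)]
      have : Finset.Ioc 0 (N+1) = Finset.Icc 1 (N+1) := by
        ext x; simp [Nat.lt_iff_add_one_le]
      rw [this]; ring
    have hS : ∑ a ∈ Finset.Icc 1 (N + 1), q a
        = (∑ a ∈ Finset.Icc 1 (N + 1),
            ((N + 1).choose a : ℝ) * ∏ i ∈ Finset.range a, p i / (1 - p i)) * q 0 := by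
      rw [Finset.sum_mul]
      refine Finset.sum_congr rfl fun a haa => ?_
      simp only [Finset.mem_Icc] at haa
      exact key a haa.2
    set S := ∑ a ∈ Finset.Icc 1 (N + 1),
        ((N + 1).choose a : ℝ) * ∏ i ∈ Finset.range a, p i / (1 - p i) with hSdef
    have hq0 : 0 < q 0 := hpos 0 (by omega)
    have hmain : q 0 * (1 + S) = 1 := by
      rw [hsplit, hS] at hsum
      linear_combination hsum
    have h1S : (1 + S) ≠ 0 := by
      intro h; rw [h, mul_zero] at hmain; norm_num at hmain
    field_simp
    linarith [hmain]
end

section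
/- Let N ≥ 2 and M with 2 ≤ M < N+1. Let q : {0,...,N+1} → ℝ be a pmf with q(a) = (N/(a(N-a+1)))·q(1) for a = 1,...,N. Define q_M(a) = ∑_{A=a}^{N+1-(M-a)} (C(A,a)·C(N+1-A,M-a)/C(N+1,M))·q(A) for a = 0,...,M. Then for each a = 1,...,M-1, q_M(a) ≤ C(M,a)·((N+2-M)/(N+1))·q(1), and hence ∑_{a=1}^{M-1} q_M(a) ≤ 2^M·((N+2-M)/(N+1))·q(1). -/
open Finset

private lemma sum_range_choose_aux (n k : ℕ) :
    ∑ B ∈ range (n + 1), B.choose k = (n + 1).choose (k + 1) := by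
  induction n with
  | zero =>
    simp [Nat.choose_succ_succ]
  | succ n ih =>
    rw [Finset.sum_range_succ, ih, Nat.choose_succ_succ (n + 1) k, Nat.add_comm]

/-- Upper-index Vandermonde convolution. -/
private lemma choose_conv (j : ℕ) : ∀ n k : ℕ,
    ∑ B ∈ range (n + 1), B.choose j * (n - B).choose k = (n + 1).choose (j + k + 1) := by
  induction j with
  | zero =>
    intro n k
    simp only [Nat.choose_zero_right, one_mul, Nat.zero_add]
    rw [← Finset.sum_range_reflect]
    have : ∀ B ∈ range (n + 1), (n - (n + 1 - 1 - B)).choose k = B.choose k := by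
      intro B hB
      rw [Finset.mem_range] at hB
      congr 1
      omega
    rw [Finset.sum_congr rfl this]
    exact sum_range_choose_aux n k
  | succ j ih =>
    intro n k
    induction n with
    | zero =>
      simp [Nat.choose_eq_zero_of_lt (by omega : (1:ℕ) < j + 1 + k + 1)]
    | succ n ihn =>
      rw [Finset.sum_range_succ']
      have h0 : (0:ℕ).choose (j + 1) * (n + 1 - 0).choose k = 0 := by
        simp [Nat.choose_eq_zero_of_lt (by omega : (0:ℕ) < j + 1)]
      rw [h0, Nat.add_zero]
      have hterm : ∀ B ∈ range (n + 1),
          (B + 1).choose (j + 1) * (n + 1 - (B + 1)).choose k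
            = B.choose j * (n - B).choose k + B.choose (j + 1) * (n - B).choose k := by
        intro B hB
        rw [Nat.choose_succ_succ, Nat.succ_sub_succ, Nat.add_mul]
      rw [Finset.sum_congr rfl hterm, Finset.sum_add_distrib, ih n k, ihn]
      have hjk : j + 1 + k + 1 = j + k + 1 + 1 := by omega
      rw [hjk]
      exact (Nat.choose_succ_succ (n + 1) (j + k + 1)).symm

set_option maxHeartbeats 1000000 in
/-- The bound (7) of Theorem 2's proof: reducing a universally
frequency-mimicking pmf for the sum of `N+1` events to `M` events via the
hypergeometric mixture reduction bounds the interior masses by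
`C(M,a)·((N+2-M)/(N+1))·q 1`. -/
theorem stmt_17 (N M : ℕ) (hN : 2 ≤ N) (hM : 2 ≤ M) (hMN : M < N + 1)
    (q qM : ℕ → ℝ)
    (hpos : ∀ a ≤ N + 1, 0 ≤ q a)
    (hsum : ∑ a ∈ Finset.range (N + 2), q a = 1)
    (hint : ∀ a, 1 ≤ a → a ≤ N →
        q a = ((N : ℝ) / ((a : ℝ) * ((N : ℝ) - (a : ℝ) + 1))) * q 1)
    (hqM : ∀ a ≤ M, qM a =
        ∑ A ∈ Finset.Icc a (N + 1 - (M - a)),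
          ((A.choose a : ℝ) * ((N + 1 - A).choose (M - a) : ℝ) /
            ((N + 1).choose M : ℝ)) * q A) :
    (∀ a, 1 ≤ a → a ≤ M - 1 →
        qM a ≤ (M.choose a : ℝ) * (((N : ℝ) + 2 - (M : ℝ)) / ((N : ℝ) + 1)) * q 1) ∧
      ∑ a ∈ Finset.Icc 1 (M - 1), qM a ≤
        2 ^ M * (((N : ℝ) + 2 - (M : ℝ)) / ((N : ℝ) + 1)) * q 1 := by
  have hq1 : 0 ≤ q 1 := hpos 1 (by omega)
  have hMleN : M ≤ N := by omega
  have key : ∀ a, 1 ≤ a → a ≤ M - 1 →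
      qM a ≤ (M.choose a : ℝ) * (((N : ℝ) + 2 - (M : ℝ)) / ((N : ℝ) + 1)) * q 1 := by
    intro a ha1 haM
    have haM' : a ≤ M := by omega
    have hMa1 : 1 ≤ M - a := by omega
    rw [hqM a haM']
    -- the summation interval
    have hub : N + 1 - (M - a) = a + (N + 1 - M) := by omega
    -- rewrite each term
    have hterm : ∀ A ∈ Icc a (N + 1 - (M - a)),
        ((A.choose a : ℝ) * ((N + 1 - A).choose (M - a) : ℝ) /
            ((N + 1).choose M : ℝ)) * q A
          = (((A - 1).choose (a - 1) : ℝ) * ((N - A).choose (M - a - 1) : ℝ))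
              * (((N : ℝ) / ((a : ℝ) * ((M : ℝ) - (a : ℝ)) * (((N + 1).choose M : ℝ)))) * q 1) := by
      intro A hA
      rw [Finset.mem_Icc] at hA
      have hA1 : 1 ≤ A := le_trans ha1 hA.1
      have hAN : A ≤ N := by omega
      rw [hint A hA1 hAN]
      have e1 : (A.choose a : ℝ) * (a : ℝ) = (A : ℝ) * ((A - 1).choose (a - 1) : ℝ) := by
        have := Nat.add_one_mul_choose_eq (A - 1) (a - 1)
        have h1 : A - 1 + 1 = A := by omega
        have h2 : a - 1 + 1 = a := by omega
        rw [h1, h2] at this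
        exact_mod_cast congrArg (fun x : ℕ => (x : ℝ)) this.symm
      have e2 : ((N + 1 - A).choose (M - a) : ℝ) * ((M : ℝ) - (a : ℝ))
          = ((N : ℝ) - (A : ℝ) + 1) * ((N - A).choose (M - a - 1) : ℝ) := by
        have := Nat.add_one_mul_choose_eq (N - A) (M - a - 1)
        have h1 : N - A + 1 = N + 1 - A := by omega
        have h2 : M - a - 1 + 1 = M - a := by omega
        rw [h1, h2] at this
        have hcast : ((N + 1 - A : ℕ) : ℝ) * ((N - A).choose (M - a - 1) : ℝ)
            = ((N + 1 - A).choose (M - a) : ℝ) * ((M - a : ℕ) : ℝ) := by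
          exact_mod_cast congrArg (fun x : ℕ => (x : ℝ)) this
        have c1 : ((N + 1 - A : ℕ) : ℝ) = (N : ℝ) - (A : ℝ) + 1 := by
          have : (A : ℝ) ≤ (N : ℝ) := by exact_mod_cast hAN
          push_cast [Nat.cast_sub (by omega : A ≤ N + 1)]
          ring
        have c2 : ((M - a : ℕ) : ℝ) = (M : ℝ) - (a : ℝ) := by
          push_cast [Nat.cast_sub haM']
          ring
        rw [c1, c2] at hcast
        linarith [hcast]
      have hApos : (0:ℝ) < (A : ℝ) := by exact_mod_cast hA1
      have hNApos : (0:ℝ) < (N : ℝ) - (A : ℝ) + 1 := by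
        have : (A : ℝ) ≤ (N : ℝ) := by exact_mod_cast hAN
        linarith
      have hapos : (0:ℝ) < (a : ℝ) := by exact_mod_cast ha1
      have hMapos : (0:ℝ) < (M : ℝ) - (a : ℝ) := by
        have : (a : ℝ) < (M : ℝ) := by exact_mod_cast (by omega : a < M)
        linarith
      have hCpos : (0:ℝ) < ((N + 1).choose M : ℝ) := by
        exact_mod_cast Nat.choose_pos (by omega : M ≤ N + 1)
      have keymul : (A.choose a : ℝ) * ((N + 1 - A).choose (M - a) : ℝ)
            * ((a : ℝ) * ((M : ℝ) - (a : ℝ)))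
          = ((A - 1).choose (a - 1) : ℝ) * ((N - A).choose (M - a - 1) : ℝ)
            * ((A : ℝ) * ((N : ℝ) - (A : ℝ) + 1)) := by
        calc (A.choose a : ℝ) * ((N + 1 - A).choose (M - a) : ℝ)
              * ((a : ℝ) * ((M : ℝ) - (a : ℝ)))
            = ((A.choose a : ℝ) * (a : ℝ))
              * (((N + 1 - A).choose (M - a) : ℝ) * ((M : ℝ) - (a : ℝ))) := by ring
          _ = ((A : ℝ) * ((A - 1).choose (a - 1) : ℝ))
              * (((N : ℝ) - (A : ℝ) + 1) * ((N - A).choose (M - a - 1) : ℝ)) := by rw [e1, e2]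
          _ = ((A - 1).choose (a - 1) : ℝ) * ((N - A).choose (M - a - 1) : ℝ)
              * ((A : ℝ) * ((N : ℝ) - (A : ℝ) + 1)) := by ring
      field_simp
      linear_combination (q 1) * keymul
    rw [Finset.sum_congr rfl hterm, ← Finset.sum_mul]
    -- evaluate the natural number sum
    have hnat : ∑ A ∈ Icc a (N + 1 - (M - a)), (A - 1).choose (a - 1) * (N - A).choose (M - a - 1)
        = N.choose (M - 1) := by
      have hsub : Icc a (N + 1 - (M - a)) ⊆ Icc 1 N := by
        intro x hx
        rw [Finset.mem_Icc] at hx ⊢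
        omega
      rw [Finset.sum_subset hsub (by
        intro x hx hnx
        rw [Finset.mem_Icc] at hx
        rw [Finset.mem_Icc] at hnx
        rcases (by omega : x < a ∨ N + 1 - (M - a) < x) with h | h
        · rw [Nat.choose_eq_zero_of_lt (by omega : x - 1 < a - 1)]
          exact Nat.zero_mul _
        · rw [Nat.choose_eq_zero_of_lt (by omega : N - x < M - a - 1)]
          exact Nat.mul_zero _)]
      rw [show Icc 1 N = Ico 1 (N + 1) by rfl, Finset.sum_Ico_eq_sum_range]
      have : ∀ B ∈ range (N + 1 - 1), (1 + B - 1).choose (a - 1) * (N - (1 + B)).choose (M - a - 1)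
          = B.choose (a - 1) * ((N - 1) - B).choose (M - a - 1) := by
        intro B hB
        congr 2 <;> omega
      rw [Finset.sum_congr rfl this]
      have hrw : N + 1 - 1 = (N - 1) + 1 := by omega
      rw [hrw, choose_conv (a - 1) (N - 1) (M - a - 1)]
      congr 1 <;> omega
    have hnatR : (∑ A ∈ Icc a (N + 1 - (M - a)),
        ((A - 1).choose (a - 1) : ℝ) * ((N - A).choose (M - a - 1) : ℝ))
        = (N.choose (M - 1) : ℝ) := by exact_mod_cast hnat
    rw [hnatR]
    -- now the closed form; reduce to an inequality of reals
    have hCC : ((N + 1).choose M : ℝ) * (M : ℝ) = ((N : ℝ) + 1) * (N.choose (M - 1) : ℝ) := by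
      have := Nat.add_one_mul_choose_eq N (M - 1)
      have h2 : M - 1 + 1 = M := by omega
      rw [h2] at this
      exact_mod_cast congrArg (fun x : ℕ => (x : ℝ)) this.symm
    have hCpos : (0:ℝ) < ((N + 1).choose M : ℝ) := by
      exact_mod_cast Nat.choose_pos (by omega : M ≤ N + 1)
    have hCpos2 : (0:ℝ) < (N.choose (M - 1) : ℝ) := by
      exact_mod_cast Nat.choose_pos (by omega : M - 1 ≤ N)
    have hapos : (0:ℝ) < (a : ℝ) := by exact_mod_cast ha1
    have hMapos : (0:ℝ) < (M : ℝ) - (a : ℝ) := by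
      have : (a : ℝ) < (M : ℝ) := by exact_mod_cast (by omega : a < M)
      linarith
    have hN1 : (0:ℝ) < (N : ℝ) + 1 := by positivity
    -- LHS = N*M/(a(M-a)(N+1)) * q 1
    have hval : (N.choose (M - 1) : ℝ) *
        (((N : ℝ) / ((a : ℝ) * ((M : ℝ) - (a : ℝ)) * (((N + 1).choose M : ℝ)))) * q 1)
        = ((N : ℝ) * (M : ℝ) / ((a : ℝ) * ((M : ℝ) - (a : ℝ)) * ((N : ℝ) + 1))) * q 1 := by
      have hane : ((a : ℝ)) ≠ 0 := ne_of_gt hapos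
      have hMane : ((M : ℝ) - (a : ℝ)) ≠ 0 := ne_of_gt hMapos
      have hCne : (((N + 1).choose M : ℝ)) ≠ 0 := ne_of_gt hCpos
      have hN1ne : ((N : ℝ) + 1) ≠ 0 := ne_of_gt hN1
      field_simp
      linear_combination (-(q 1)) * hCC
    -- key combinatorial inequality
    have hchoose : (M * (M - 1) : ℕ) ≤ a * (M - a) * M.choose a := by
      have e1 : M.choose a * a = M * (M - 1).choose (a - 1) := by
        have := Nat.add_one_mul_choose_eq (M - 1) (a - 1)
        have h1 : M - 1 + 1 = M := by omega
        have h2 : a - 1 + 1 = a := by omega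
        rw [h1, h2] at this
        exact this.symm
      have e2 : (M - 1).choose (a - 1) * (M - a) = (M - 1) * (M - 2).choose (a - 1) := by
        have := Nat.choose_mul_succ_eq (M - 2) (a - 1)
        have h1 : M - 2 + 1 = M - 1 := by omega
        have h2 : M - 1 - (a - 1) = M - a := by omega
        rw [h1, h2] at this
        exact this.symm.trans (Nat.mul_comm _ _)
      have e3 : 1 ≤ (M - 2).choose (a - 1) := Nat.choose_pos (by omega : a - 1 ≤ M - 2)
      calc M * (M - 1) ≤ M * (M - 1) * (M - 2).choose (a - 1) :=
            Nat.le_mul_of_pos_right _ e3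
        _ = M * ((M - 1) * (M - 2).choose (a - 1)) := by ring
        _ = M * ((M - 1).choose (a - 1) * (M - a)) := by rw [e2]
        _ = (M * (M - 1).choose (a - 1)) * (M - a) := by ring
        _ = (M.choose a * a) * (M - a) := by rw [← e1]
        _ = a * (M - a) * M.choose a := by ring
    have hchoose' : (M : ℝ) * ((M : ℝ) - 1) ≤ (a : ℝ) * ((M : ℝ) - (a : ℝ)) * (M.choose a : ℝ) := by
      have c2 : ((M - a : ℕ) : ℝ) = (M : ℝ) - (a : ℝ) := by
        push_cast [Nat.cast_sub haM']; ring
      have c3 : ((M - 1 : ℕ) : ℝ) = (M : ℝ) - 1 := by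
        push_cast [Nat.cast_sub (by omega : 1 ≤ M)]; ring
      have := (Nat.cast_le (α := ℝ)).mpr hchoose
      push_cast at this
      rw [c2, c3] at *
      nlinarith [this]
    -- final inequality: N*M/(a(M-a)(N+1)) ≤ C(M,a)(N+2-M)/(N+1)
    have hfin : (N : ℝ) * (M : ℝ) / ((a : ℝ) * ((M : ℝ) - (a : ℝ)) * ((N : ℝ) + 1))
        ≤ (M.choose a : ℝ) * (((N : ℝ) + 2 - (M : ℝ)) / ((N : ℝ) + 1)) := by
      have hMN' : (M : ℝ) ≤ (N : ℝ) := by exact_mod_cast hMleN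
      have hM2 : (2 : ℝ) ≤ (M : ℝ) := by exact_mod_cast hM
      have hposc : (0:ℝ) ≤ (N : ℝ) + 2 - (M : ℝ) := by linarith
      have step := mul_le_mul_of_nonneg_right hchoose' hposc
      have quad : (N : ℝ) * (M : ℝ) ≤ (M : ℝ) * ((M : ℝ) - 1) * ((N : ℝ) + 2 - (M : ℝ)) := by
        have hq : (0:ℝ) ≤ (M : ℝ) * ((M : ℝ) - 2) * ((N : ℝ) + 1 - (M : ℝ)) :=
          mul_nonneg (mul_nonneg (by positivity) (by linarith)) (by linarith)
        nlinarith [hq]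
      have key2 : (N : ℝ) * (M : ℝ)
          ≤ (M.choose a : ℝ) * ((N : ℝ) + 2 - (M : ℝ)) * ((a : ℝ) * ((M : ℝ) - (a : ℝ))) := by
        linarith only [step, quad]
      rw [← mul_div_assoc, div_le_div_iff₀ (by positivity) (by positivity)]
      linarith only [mul_le_mul_of_nonneg_right key2 hN1.le]
    rw [hval]
    exact mul_le_mul_of_nonneg_right hfin hq1
  refine ⟨key, ?_⟩
  have hc : (0:ℝ) ≤ (((N : ℝ) + 2 - (M : ℝ)) / ((N : ℝ) + 1)) * q 1 := by
    have hMN' : (M : ℝ) ≤ (N : ℝ) := by exact_mod_cast hMleN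
    have : (0:ℝ) ≤ ((N : ℝ) + 2 - (M : ℝ)) / ((N : ℝ) + 1) := by
      apply div_nonneg <;> linarith
    exact mul_nonneg this hq1
  calc ∑ a ∈ Icc 1 (M - 1), qM a
      ≤ ∑ a ∈ Icc 1 (M - 1), (M.choose a : ℝ) * ((((N : ℝ) + 2 - (M : ℝ)) / ((N : ℝ) + 1)) * q 1) := by
        apply Finset.sum_le_sum
        intro a ha
        rw [Finset.mem_Icc] at ha
        rw [← mul_assoc]
        exact key a ha.1 ha.2
    _ = (∑ a ∈ Icc 1 (M - 1), (M.choose a : ℝ)) * ((((N : ℝ) + 2 - (M : ℝ)) / ((N : ℝ) + 1)) * q 1) := by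
        rw [Finset.sum_mul]
    _ ≤ (2 ^ M : ℝ) * ((((N : ℝ) + 2 - (M : ℝ)) / ((N : ℝ) + 1)) * q 1) := by
        apply mul_le_mul_of_nonneg_right _ hc
        have h1 : ∑ a ∈ Icc 1 (M - 1), M.choose a ≤ ∑ a ∈ range (M + 1), M.choose a := by
          apply Finset.sum_le_sum_of_subset
          intro x hx
          rw [Finset.mem_Icc] at hx
          rw [Finset.mem_range]
          omega
        rw [Nat.sum_range_choose] at h1
        calc (∑ a ∈ Icc 1 (M - 1), (M.choose a : ℝ))
            = ((∑ a ∈ Icc 1 (M - 1), M.choose a : ℕ) : ℝ) := by push_cast; ring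
          _ ≤ ((2 ^ M : ℕ) : ℝ) := by exact_mod_cast h1
          _ = (2 ^ M : ℝ) := by push_cast; ring
    _ = 2 ^ M * (((N : ℝ) + 2 - (M : ℝ)) / ((N : ℝ) + 1)) * q 1 := by ring
end
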